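/- Let P_0, P_1 be two probability measures on a measurable space, let C be a random set (confidence interval) with endpoints measurable, let 0 and δ be two real values, and set A_0 = {0 ∈ C}, A_1 = {δ ∈ C}, W = sup C − inf C. If P_0(A_0) ≥ 1 − α, P_1(A_1) ≥ 1 − α, and the total variation distance TV(P_0, P_1) ≤ τ, then P_0(W² ≥ δ²) ≥ 1 − 2α − τ. -/

import Mathlib

/-!
On the event that both `0` and `δ` lie in `[L, U]`, the width satisfies `(U - L)² ≥ δ²`.
By the Bonferroni inequality this event has `P0`-probability at least `P0(A0) + P0(A1) - 1`,
and the total variation bound transfers `P1(A1) ≥ 1 - α` to `P0(A1) ≥ 1 - α - τ`.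
-/

open MeasureTheory Set

lemma sq_sub_le_sq_sub_of_mem_Icc {a b x y : ℝ} (hx : x ∈ Icc a b) (hy : y ∈ Icc a b) :
    (y - x) ^ 2 ≤ (b - a) ^ 2 := by
  rw [← sq_abs]
  exact pow_le_pow_left₀ (abs_nonneg _) (Real.dist_le_of_mem_Icc hy hx) 2

lemma measureReal_add_measureReal_le_measureReal_inter_add_one {Ω : Type*} [MeasurableSpace Ω]
    {μ : Measure Ω} [IsProbabilityMeasure μ] {s t : Set Ω} (ht : MeasurableSet t) :
    μ.real s + μ.real t ≤ μ.real (s ∩ t) + 1 := by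
  rw [← measureReal_union_add_inter₀ ht.nullMeasurableSet, add_comm]
  gcongr
  exact measureReal_le_one

theorem stmt7 {Ω : Type*} [MeasurableSpace Ω] (P0 P1 : Measure Ω)
    [IsProbabilityMeasure P0] [IsProbabilityMeasure P1]
    (L U : Ω → ℝ) (hL : Measurable L) (hU : Measurable U) (δ α τ : ℝ)
    (h0 : 1 - α ≤ (P0 {ω | L ω ≤ 0 ∧ 0 ≤ U ω}).toReal)
    (h1 : 1 - α ≤ (P1 {ω | L ω ≤ δ ∧ δ ≤ U ω}).toReal)
    (hTV : ∀ s : Set Ω, MeasurableSet s → |(P0 s).toReal - (P1 s).toReal| ≤ τ) :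
    1 - 2 * α - τ ≤ (P0 {ω | δ ^ 2 ≤ (U ω - L ω) ^ 2}).toReal := by
  simp only [← measureReal_def] at h0 h1 hTV ⊢
  set A0 := {ω | L ω ≤ 0 ∧ 0 ≤ U ω}
  set A1 := {ω | L ω ≤ δ ∧ δ ≤ U ω}
  have hA1 : MeasurableSet A1 := (hL measurableSet_Iic).inter (hU measurableSet_Ici)
  have hP0A1 : P1.real A1 - τ ≤ P0.real A1 := by linarith [(abs_le.mp (hTV A1 hA1)).1]
  have hboth : P0.real A0 + P0.real A1 ≤ P0.real (A0 ∩ A1) + 1 :=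
    measureReal_add_measureReal_le_measureReal_inter_add_one hA1
  have hwidth : A0 ∩ A1 ⊆ {ω | δ ^ 2 ≤ (U ω - L ω) ^ 2} := fun ω ⟨hω0, hωδ⟩ => by
    simpa using sq_sub_le_sq_sub_of_mem_Icc (show (0 : ℝ) ∈ Icc (L ω) (U ω) from hω0) hωδ
  linarith [measureReal_mono (μ := P0) hwidth]
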